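/- Let q > 3 be a prime power and let m ≥ 2. The minimum distance of the toric code associated with the order polytope of the m-th shrub S_m is d(C_{O_{S_m}}) = (q−1)(q−2)^{m−1}. -/

import Mathlib

open Finset

/-- A subset `W` of `α` is an upper order ideal with respect to the order relation `le`
if it is upward closed. -/
def IsUpperIdeal {α : Type*} (le : α → α → Prop) (W : Set α) : Prop :=
  ∀ ⦃x⦄, x ∈ W → ∀ ⦃y⦄, le x y → y ∈ W

/-- The space `L_P` of sections: the `F`-span of the monomials `∏_{i ∈ W} x_i`,
where `W` ranges over the upper order ideals of the poset `(α, le)`. -/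
def monomialSpan (α : Type*) [Fintype α] (le : α → α → Prop)
    (F : Type*) [Field F] : Submodule F ((α → Fˣ) → F) :=
  Submodule.span F {g : (α → Fˣ) → F |
    ∃ W : Finset α, (∀ x ∈ W, ∀ y, le x y → y ∈ W) ∧
      g = fun x => ∏ i ∈ W, (x i : F)}

/-- The minimum distance of the toric code of the order polytope of the poset `(α, le)`
over the finite field `F`:  `(q-1)^m - max { Z(f) : f ∈ L_P, f ≠ 0 }`. -/
noncomputable def toricMinDist (α : Type*) [Fintype α] (le : α → α → Prop)
    (F : Type*) [Field F] [Fintype F] : ℕ :=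
  (Fintype.card F - 1) ^ Fintype.card α -
    sSup {n : ℕ | ∃ g ∈ monomialSpan α le F, g ≠ 0 ∧
      n = Nat.card {x : α → Fˣ // g x = 0}}

/-- The order relation of the `m`-th shrub `S_m` on `Fin m`: the element `ε_1` (index `0`)
is below every other element, and the elements `ε_2, …, ε_m` are pairwise incomparable. -/
def shrubLE (m : ℕ) : Fin m → Fin m → Prop :=
  fun a b => a = b ∨ a.val = 0

/-! Write `Q = q - 1` for the number of values of each coordinate on the torus. If `g ≠ 0` lies in
the span `V_T` of the squarefree monomials in the variables `x_i`, `i ∈ T`, then `g` is nonzero at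
no fewer than `(Q - 1)^|T| Q^(m - |T|)` points: writing `g = g₀ + x_a g₁` with `g₀, g₁ ∈ V_{T - a}`,
on every line in direction `a` on which `g₁ ≠ 0` the function `g` is affine in `x_a` with nonzero
slope, hence vanishes at most once, and induction on `|T|` applies.

An upper ideal of the shrub containing the root `ε_1` is everything, so `L_{S_m}` is
`V_T + 𝔽_q x_1 ⋯ x_m` with `T = {2, …, m}`. An element with no `x_1 ⋯ x_m` term has at least
`(Q - 1)^(m - 1) Q` nonzeros, and one with such a term has at least `(Q - 1) Q^(m - 1)`, which is
no less when `m ≥ 2`. The bound is attained by `∏_{i ≥ 2} (x_i - 1)`.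
-/

open Function

section Counting

variable {ι β : Type*} [Fintype ι] [DecidableEq ι] [Fintype β]

lemma mul_card_le_card_mul_card_filter_of_update (p : (ι → β) → Prop) [DecidablePred p]
    (a : ι) (A : Finset (ι → β)) (r : ℕ) (hA : ∀ x ∈ A, r ≤ #{t | p (update x a t)}) :
    r * #A ≤ Fintype.card β * #{x | p x} := by
  let P := (A ×ˢ univ).filter fun xt : (ι → β) × β => p (update xt.1 a xt.2)
  have hP : #P = ∑ x ∈ A, #{t | p (update x a t)} := by
    simp only [P, card_filter, sum_product]
  have hinj : Injective fun xt : (ι → β) × β => (update xt.1 a xt.2, xt.1 a) := by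
    rintro ⟨x₁, t₁⟩ ⟨x₂, t₂⟩ h
    simp only [Prod.mk.injEq] at h
    obtain ⟨hu, ha⟩ := h
    refine Prod.ext ?_ ?_
    · have h := congrArg (update · a (x₁ a)) hu
      simp only [update_idem, update_eq_self] at h
      rwa [ha, update_eq_self] at h
    · simpa using congrFun hu a
  calc r * #A ≤ #P := by
        rw [hP, mul_comm]; simpa using card_nsmul_le_sum A _ r hA
    _ ≤ #((univ.filter p) ×ˢ (univ : Finset β)) :=
        card_le_card_of_injOn _ (fun xt hxt => by simp_all [P]) hinj.injOn
    _ = Fintype.card β * #{x | p x} := by rw [card_product, card_univ, mul_comm]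

end Counting

section Multilinear

variable {ι F : Type*} [Field F]

variable (F) in
def torusMonomial (S : Finset ι) : (ι → Fˣ) → F := fun x => ∏ i ∈ S, (x i : F)

variable (F) in
def torusCoord (a : ι) : (ι → Fˣ) → F := fun x => x a

variable (F) in
def multilinearSpan (T : Finset ι) : Submodule F ((ι → Fˣ) → F) :=
  Submodule.span F (torusMonomial F '' {S | S ⊆ T})

lemma torusMonomial_mem_multilinearSpan {S T : Finset ι} (h : S ⊆ T) :
    torusMonomial F S ∈ multilinearSpan F T :=
  Submodule.subset_span ⟨S, h, rfl⟩

lemma apply_update_of_mem_multilinearSpan [DecidableEq ι] {T : Finset ι} {g : (ι → Fˣ) → F}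
    (hg : g ∈ multilinearSpan F T) {a : ι} (ha : a ∉ T) (x : ι → Fˣ) (t : Fˣ) :
    g (update x a t) = g x := by
  induction hg using Submodule.span_induction with
  | mem g hg =>
    obtain ⟨S, hS, rfl⟩ := hg
    exact prod_congr rfl fun i hi => by rw [update_of_ne (ne_of_mem_of_not_mem (hS hi) ha)]
  | zero => rfl
  | add f g _ _ hf hg => simp only [Pi.add_apply, hf, hg]
  | smul c f _ hf => simp only [Pi.smul_apply, hf]

lemma multilinearSpan_insert_le [DecidableEq ι] (a : ι) (T : Finset ι) :
    multilinearSpan F (insert a T) ≤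
      multilinearSpan F T ⊔ (multilinearSpan F T).map (LinearMap.mulLeft F (torusCoord F a)) := by
  rw [multilinearSpan, Submodule.span_le]
  rintro _ ⟨S, hS, rfl⟩
  by_cases haS : a ∈ S
  · refine Submodule.mem_sup_right ⟨torusMonomial F (S.erase a), ?_, ?_⟩
    · exact torusMonomial_mem_multilinearSpan fun i hi =>
        (mem_insert.1 (hS (mem_of_mem_erase hi))).resolve_left (ne_of_mem_erase hi)
    · funext x
      exact mul_prod_erase S (fun i => (x i : F)) haS
  · refine Submodule.mem_sup_left (torusMonomial_mem_multilinearSpan fun i hi => ?_)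
    exact (mem_insert.1 (hS hi)).resolve_left (ne_of_mem_of_not_mem hi haS)

lemma prod_sub_one_mem_multilinearSpan [DecidableEq ι] (T : Finset ι) :
    (fun x : ι → Fˣ => ∏ i ∈ T, ((x i : F) - 1)) ∈ multilinearSpan F T := by
  have hexpand : (fun x : ι → Fˣ => ∏ i ∈ T, ((x i : F) - 1)) =
      ∑ S ∈ T.powerset, (-1 : F) ^ #S • torusMonomial F (T \ S) := by
    funext x
    simp [prod_sub, torusMonomial]
  rw [hexpand]
  exact Submodule.sum_mem _ fun S _ => Submodule.smul_mem _ _ <|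
    torusMonomial_mem_multilinearSpan sdiff_subset

end Multilinear

section NonzeroCount

variable {ι F : Type*} [Fintype ι] [DecidableEq ι] [Field F] [Fintype F] [DecidableEq F]

lemma card_units_sub_one_le_card_add_mul_ne_zero (u : F) {v : F} (hv : v ≠ 0) :
    Fintype.card Fˣ - 1 ≤ #{t : Fˣ | u + t * v ≠ 0} := by
  have hroot : #{t : Fˣ | u + t * v = 0} ≤ 1 :=
    card_le_one.2 fun t₁ h₁ t₂ h₂ => Units.ext <| mul_right_cancel₀ hv <| by
      simp only [mem_filter, mem_univ, true_and] at h₁ h₂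
      linear_combination h₁ - h₂
  have := card_filter_add_card_filter_not (s := (univ : Finset Fˣ)) fun t => u + t * v = 0
  simp only [card_univ, ← ne_eq] at this
  omega

-- On a line in direction `a` where `g₁ ≠ 0`, the function `g₀ + x_a g₁` is affine in `x_a` with
-- nonzero slope, so it has at most one zero there.
lemma card_sub_one_mul_card_ne_zero_le {g₀ g₁ : (ι → Fˣ) → F} {a : ι}
    (hg₀ : ∀ x t, g₀ (update x a t) = g₀ x) (hg₁ : ∀ x t, g₁ (update x a t) = g₁ x) :
    (Fintype.card Fˣ - 1) * #{x | g₁ x ≠ 0} ≤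
      Fintype.card Fˣ * #{x | (g₀ + torusCoord F a * g₁) x ≠ 0} := by
  refine mul_card_le_card_mul_card_filter_of_update _ a _ _ fun x hx => ?_
  simp only [Pi.add_apply, Pi.mul_apply, torusCoord, hg₀, hg₁, update_self]
  exact card_units_sub_one_le_card_add_mul_ne_zero _ (mem_filter.1 hx).2

lemma pow_mul_pow_le_card_ne_zero_of_mem_multilinearSpan {T : Finset ι} {g : (ι → Fˣ) → F}
    (hg : g ∈ multilinearSpan F T) (hg0 : g ≠ 0) :
    (Fintype.card Fˣ - 1) ^ #T * Fintype.card Fˣ ^ #Tᶜ ≤ #{x | g x ≠ 0} := by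
  induction T using Finset.induction_on generalizing g with
  | empty =>
    have hspan : multilinearSpan F (∅ : Finset ι) = F ∙ 1 := by
      simp only [multilinearSpan, subset_empty, Set.ofPred_eq_eq_singleton, Set.image_singleton]
      congr
    rw [hspan, Submodule.mem_span_singleton] at hg
    obtain ⟨c, rfl⟩ := hg
    have hc : c ≠ 0 := by rintro rfl; exact hg0 (zero_smul F _)
    simp [hc]
  | insert a T ha ih =>
    obtain ⟨g₀, hg₀, _, ⟨g₁, hg₁, rfl⟩, rfl⟩ :=
      Submodule.mem_sup.1 (multilinearSpan_insert_le a T hg)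
    have hcompl : #Tᶜ = #(insert a T)ᶜ + 1 := by
      rw [compl_insert, card_erase_add_one (mem_compl.2 ha)]
    rw [card_insert_of_notMem ha]
    rw [hcompl] at ih
    set Q := Fintype.card Fˣ
    rcases eq_or_ne g₁ 0 with rfl | hg₁0
    · rw [map_zero, add_zero] at hg0 ⊢
      calc (Q - 1) ^ (#T + 1) * Q ^ #(insert a T)ᶜ
          ≤ (Q - 1) ^ #T * Q ^ (#(insert a T)ᶜ + 1) := by
            rw [pow_succ, pow_succ', ← mul_assoc]
            gcongr
            exact Nat.sub_le Q 1
        _ ≤ #{x | g₀ x ≠ 0} := ih hg₀ hg0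
    · refine Nat.le_of_mul_le_mul_left ?_ (Fintype.card_pos : 0 < Q)
      calc Q * ((Q - 1) ^ (#T + 1) * Q ^ #(insert a T)ᶜ)
          = (Q - 1) * ((Q - 1) ^ #T * Q ^ (#(insert a T)ᶜ + 1)) := by ring
        _ ≤ (Q - 1) * #{x | g₁ x ≠ 0} := Nat.mul_le_mul_left _ (ih hg₁ hg₁0)
        _ ≤ Q * #{x | (g₀ + torusCoord F a * g₁) x ≠ 0} :=
            card_sub_one_mul_card_ne_zero_le
              (apply_update_of_mem_multilinearSpan hg₀ ha)
              (apply_update_of_mem_multilinearSpan hg₁ ha)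

lemma card_prod_sub_one_ne_zero (T : Finset ι) :
    #{x : ι → Fˣ | ∏ i ∈ T, ((x i : F) - 1) ≠ 0} =
      (Fintype.card Fˣ - 1) ^ #T * Fintype.card Fˣ ^ #Tᶜ := by
  have hset : ({x : ι → Fˣ | ∏ i ∈ T, ((x i : F) - 1) ≠ 0} : Finset _) =
      Fintype.piFinset fun i => if i ∈ T then univ.erase 1 else univ := by
    ext x
    simp only [mem_filter, mem_univ, true_and, prod_ne_zero_iff, sub_ne_zero,
      Fintype.mem_piFinset]
    refine forall_congr' fun i => ?_
    split_ifs with hi <;> simp [hi, Units.val_eq_one]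
  simp only [hset, Fintype.card_piFinset, apply_ite card, prod_ite, filter_mem_eq_inter,
    filter_notMem_eq_sdiff, ← compl_eq_univ_sdiff]
  simp [card_erase_of_mem]

end NonzeroCount

lemma toricMinDist_eq {α : Type*} [Fintype α] [DecidableEq α] (le : α → α → Prop)
    (F : Type*) [Field F] [Fintype F] [DecidableEq F] {N : ℕ}
    (hle : ∀ g ∈ monomialSpan α le F, g ≠ 0 → N ≤ #{x | g x ≠ 0})
    (hex : ∃ g ∈ monomialSpan α le F, g ≠ 0 ∧ #{x | g x ≠ 0} = N) :
    toricMinDist α le F = N := by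
  have hpoints : Fintype.card (α → Fˣ) = (Fintype.card F - 1) ^ Fintype.card α := by
    rw [Fintype.card_fun, Fintype.card_units]
  have hzeros (g : (α → Fˣ) → F) :
      Nat.card {x // g x = 0} = Fintype.card (α → Fˣ) - #{x | g x ≠ 0} := by
    have := card_filter_add_card_filter_not (s := univ) fun x => g x = 0
    simp only [← ne_eq] at this
    rw [Nat.card_eq_fintype_card, Fintype.card_subtype, ← card_univ]
    omega
  obtain ⟨w, hw, hw0, hwN⟩ := hex
  have hN : N ≤ Fintype.card (α → Fˣ) := hwN ▸ card_le_univ _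
  have hsup : sSup {n | ∃ g ∈ monomialSpan α le F, g ≠ 0 ∧
      n = Nat.card {x : α → Fˣ // g x = 0}} = Fintype.card (α → Fˣ) - N := by
    refine IsGreatest.csSup_eq ⟨⟨w, hw, hw0, by rw [hzeros, hwN]⟩, ?_⟩
    rintro _ ⟨g, hg, hg0, rfl⟩
    rw [hzeros]
    exact Nat.sub_le_sub_left (hle g hg hg0) _
  rw [toricMinDist, hsup, ← hpoints, Nat.sub_sub_self hN]

section Shrub

variable {m : ℕ} [NeZero m] {F : Type*} [Field F]

lemma monomialSpan_shrubLE_le :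
    monomialSpan (Fin m) (shrubLE m) F ≤ multilinearSpan F {0}ᶜ ⊔ F ∙ torusMonomial F univ := by
  rw [monomialSpan, Submodule.span_le]
  rintro _ ⟨W, hW, rfl⟩
  by_cases h0 : (0 : Fin m) ∈ W
  · obtain rfl : W = univ := eq_univ_of_forall fun y => hW 0 h0 y (Or.inr rfl)
    exact Submodule.mem_sup_right (Submodule.mem_span_singleton_self _)
  · refine Submodule.mem_sup_left (torusMonomial_mem_multilinearSpan fun i hi => ?_)
    exact mem_compl.2 fun h => h0 (mem_singleton.1 h ▸ hi)

lemma multilinearSpan_le_monomialSpan_shrubLE :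
    multilinearSpan F {0}ᶜ ≤ monomialSpan (Fin m) (shrubLE m) F := by
  refine Submodule.span_mono ?_
  rintro _ ⟨S, hS, rfl⟩
  refine ⟨S, fun x hx y hxy => ?_, rfl⟩
  rcases hxy with rfl | hx0
  · exact hx
  · exact absurd (mem_singleton.2 (Fin.ext hx0)) (mem_compl.1 (hS hx))

variable [Fintype F] [DecidableEq F]

lemma pow_mul_le_card_ne_zero_of_mem_monomialSpan_shrubLE (hm : 2 ≤ m)
    {f : (Fin m → Fˣ) → F} (hf : f ∈ monomialSpan (Fin m) (shrubLE m) F) (hf0 : f ≠ 0) :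
    (Fintype.card Fˣ - 1) ^ (m - 1) * Fintype.card Fˣ ≤ #{x | f x ≠ 0} := by
  obtain ⟨g, hg, _, hc, rfl⟩ := Submodule.mem_sup.1 (monomialSpan_shrubLE_le hf)
  obtain ⟨c, rfl⟩ := Submodule.mem_span_singleton.1 hc
  set Q := Fintype.card Fˣ
  rcases eq_or_ne c 0 with rfl | hc0
  · rw [zero_smul, add_zero] at hf0 ⊢
    simpa [card_compl] using pow_mul_pow_le_card_ne_zero_of_mem_multilinearSpan hg hf0
  · set T : Finset (Fin m) := {0}ᶜ
    have hmul : c • torusMonomial F univ = torusCoord F 0 * (c • torusMonomial F T) := by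
      funext x
      simp only [T, torusMonomial, torusCoord, Pi.mul_apply, Pi.smul_apply, smul_eq_mul,
        compl_singleton, ← mul_prod_erase univ (fun i => (x i : F)) (mem_univ 0)]
      ring
    have hunit : #{x | (c • torusMonomial F T) x ≠ 0} = Q ^ m := by
      rw [filter_true_of_mem fun x _ => ?_, card_univ, Fintype.card_fun, Fintype.card_fin]
      exact smul_ne_zero hc0 (prod_ne_zero_iff.2 fun i _ => Units.ne_zero _)
    have hline := card_sub_one_mul_card_ne_zero_le
      (apply_update_of_mem_multilinearSpan hg (notMem_compl.2 (mem_singleton_self 0)))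
      (apply_update_of_mem_multilinearSpan (Submodule.smul_mem _ c
        (torusMonomial_mem_multilinearSpan subset_rfl)) (notMem_compl.2 (mem_singleton_self 0)))
    rw [hunit, ← hmul] at hline
    refine Nat.le_of_mul_le_mul_left (le_trans ?_ hline) (Fintype.card_pos : 0 < Q)
    obtain ⟨k, rfl⟩ : ∃ k, m = k + 2 := ⟨m - 2, by omega⟩
    calc Q * ((Q - 1) ^ (k + 2 - 1) * Q) = (Q - 1) * ((Q - 1) ^ k * Q ^ 2) := by
          rw [Nat.add_sub_assoc one_le_two]; ring
      _ ≤ (Q - 1) * (Q ^ k * Q ^ 2) := by gcongr; exact Nat.sub_le Q 1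
      _ = (Q - 1) * Q ^ (k + 2) := by ring

end Shrub

/-- Let `q > 3` be a prime power (realized as the cardinality of a finite
field `F`) and let `m ≥ 2`.  The minimum distance of the toric code of the order polytope of
the `m`-th shrub `S_m` is `(q-1) * (q-2)^(m-1)`. -/
theorem stmt17 (q m : ℕ) (hq : 3 < q) (hm : 2 ≤ m)
    (F : Type) [Field F] [Fintype F] (hF : Fintype.card F = q) :
    toricMinDist (Fin m) (shrubLE m) F = (q - 1) * (q - 2) ^ (m - 1) := by
  classical
  have : NeZero m := ⟨by omega⟩
  have hQ : Fintype.card Fˣ = q - 1 := by rw [Fintype.card_units, hF]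
  have hQ1 : Fintype.card Fˣ - 1 = q - 2 := by omega
  have hcount := card_prod_sub_one_ne_zero (F := F) ({0}ᶜ : Finset (Fin m))
  rw [compl_compl, card_compl, card_singleton, Fintype.card_fin, pow_one, hQ1, hQ] at hcount
  refine (toricMinDist_eq _ F (N := (q - 2) ^ (m - 1) * (q - 1)) ?_ ?_).trans (mul_comm _ _)
  · intro g hg hg0
    rw [← hQ1, ← hQ]
    exact pow_mul_le_card_ne_zero_of_mem_monomialSpan_shrubLE hm hg hg0
  · refine ⟨_, multilinearSpan_le_monomialSpan_shrubLE (prod_sub_one_mem_multilinearSpan _),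
      fun h => ?_, hcount⟩
    have hpos : 0 < (q - 2) ^ (m - 1) * (q - 1) := Nat.mul_pos (pow_pos (by omega) _) (by omega)
    obtain ⟨x, hx⟩ := card_pos.1 (hcount ▸ hpos)
    exact (mem_filter.1 hx).2 (congrFun h x)
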